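/- Let Σ be a finite alphabet and X ⊆ Σ^ℤ a minimal subshift. Then for every word u ∈ L(X) there exists a word v ∈ L(X) such that every occurrence of v in a point of X is immediately followed by u; that is, for every x ∈ X and index i, if x|_{[i; i+ℓ(v)−1]} = v then x|_{[i+ℓ(v); i+ℓ(v)+ℓ(u)−1]} = u. -/

import Mathlib

def shiftMap {A : Type*} (x : ℤ → A) : ℤ → A := fun i => x (i + 1)

def AppearsAt {A : Type*} (w : List A) (x : ℤ → A) (i : ℤ) : Prop :=
  ∀ (j : ℕ) (hj : j < w.length), x (i + j) = w.get ⟨j, hj⟩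

def InLang {A : Type*} (X : Set (ℤ → A)) (w : List A) : Prop :=
  ∃ x ∈ X, ∃ i : ℤ, AppearsAt w x i

/-!
By minimality and compactness, every word `w` of the language occurs in every window of some
fixed length `B` of every point. Hence there is a longest window `q` avoiding `w`, and any
occurrence of `q` extended by one letter must contain `w`, necessarily ending at that extra
letter: `q` forces `w` to stick out of it by one letter. Starting from `u`, which forces itself
with overhang `-ℓ(u)`, and composing such forcings `ℓ(u)` times yields a word forcing `u` to
start exactly at its end.
-/

section

variable {A : Type*}

def shiftBy (k : ℤ) (x : ℤ → A) : ℤ → A := fun i => x (i + k)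

@[simp] lemma shiftBy_zero (x : ℤ → A) : shiftBy 0 x = x :=
  funext fun i => congrArg x (add_zero i)

lemma shiftMap_shiftBy (k : ℤ) (x : ℤ → A) : shiftMap (shiftBy k x) = shiftBy (k + 1) x := by
  funext i
  simp only [shiftMap, shiftBy, add_assoc, add_comm 1 k]

lemma appearsAt_shiftBy {w : List A} {x : ℤ → A} {k i : ℤ} :
    AppearsAt w (shiftBy k x) i ↔ AppearsAt w x (i + k) := by
  simp only [AppearsAt, shiftBy, add_right_comm]

lemma appearsAt_shiftMap {w : List A} {x : ℤ → A} {i : ℤ} :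
    AppearsAt w (shiftMap x) i ↔ AppearsAt w x (i + 1) :=
  appearsAt_shiftBy (k := 1)

lemma shiftMap_injective : Function.Injective (shiftMap : (ℤ → A) → ℤ → A) := by
  intro x y h
  funext i
  simpa [shiftMap] using congrFun h (i - 1)

lemma shiftMap_mem_iff {X : Set (ℤ → A)} (hX : shiftMap '' X = X) {x : ℤ → A} :
    shiftMap x ∈ X ↔ x ∈ X := by
  conv_lhs => rw [← hX]
  exact shiftMap_injective.mem_set_image

lemma image_shiftMap_eq {Y : Set (ℤ → A)} (hY : ∀ x, shiftMap x ∈ Y ↔ x ∈ Y) :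
    shiftMap '' Y = Y := by
  ext y
  refine ⟨fun ⟨x, hx, hxy⟩ => hxy ▸ (hY x).2 hx, fun hy => ⟨shiftBy (-1) y, ?_, ?_⟩⟩
  · rwa [← hY, shiftMap_shiftBy, neg_add_cancel, shiftBy_zero]
  · rw [shiftMap_shiftBy, neg_add_cancel, shiftBy_zero]

lemma shiftBy_mem_iff {X : Set (ℤ → A)} (hX : shiftMap '' X = X) (k : ℤ) {x : ℤ → A} :
    shiftBy k x ∈ X ↔ x ∈ X := by
  induction k using Int.induction_on with
  | zero => rw [shiftBy_zero]
  | succ n ih => rw [← shiftMap_shiftBy, shiftMap_mem_iff hX, ih]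
  | pred n ih => rw [← shiftMap_mem_iff hX, shiftMap_shiftBy, sub_add_cancel, ih]

lemma isOpen_setOf_appearsAt [TopologicalSpace A] [DiscreteTopology A] (w : List A) (i : ℤ) :
    IsOpen {x : ℤ → A | AppearsAt w x i} := by
  have h : {x : ℤ → A | AppearsAt w x i} =
      ⋂ j : Fin w.length, (fun x : ℤ → A => x (i + j)) ⁻¹' {w.get j} := by
    ext x
    simp [AppearsAt, Fin.forall_iff]
  rw [h]
  exact isOpen_iInter_of_finite fun j => (isOpen_discrete _).preimage (continuous_apply _)

def window (x : ℤ → A) (i : ℤ) (n : ℕ) : List A := List.ofFn fun j : Fin n => x (i + j)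

@[simp] lemma length_window (x : ℤ → A) (i : ℤ) (n : ℕ) : (window x i n).length = n :=
  List.length_ofFn

lemma appearsAt_window_iff {x y : ℤ → A} {i p : ℤ} {n : ℕ} :
    AppearsAt (window y p n) x i ↔ ∀ j < n, x (i + j) = y (p + j) := by
  simp [AppearsAt, window]

lemma appearsAt_window_self (x : ℤ → A) (i : ℤ) (n : ℕ) : AppearsAt (window x i n) x i :=
  appearsAt_window_iff.2 fun _ _ => rfl

def OccursWithin (w : List A) (x : ℤ → A) (i : ℤ) (n : ℕ) : Prop :=
  ∃ r : ℕ, r + w.length ≤ n ∧ AppearsAt w x (i + r)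

lemma OccursWithin.of_agree {w : List A} {x y : ℤ → A} {p p' : ℤ} {n : ℕ}
    (hxy : ∀ j < n, x (p + j) = y (p' + j)) : OccursWithin w x p n → OccursWithin w y p' n := by
  rintro ⟨r, hr, hw⟩
  refine ⟨r, hr, fun j hj => ?_⟩
  rw [← hw j hj, add_assoc, add_assoc, ← Nat.cast_add]
  exact (hxy _ (by omega)).symm

def Forces (X : Set (ℤ → A)) (v u : List A) (d : ℕ) : Prop :=
  ∀ x ∈ X, ∀ i : ℤ, AppearsAt v x i → AppearsAt u x (i + d)

lemma Forces.refl (X : Set (ℤ → A)) (u : List A) : Forces X u u 0 := by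
  simp [Forces]

lemma Forces.trans {X : Set (ℤ → A)} {q w u : List A} {k d : ℕ} (hqw : Forces X q w k)
    (hwu : Forces X w u d) : Forces X q u (k + d) := by
  intro x hx i hq
  have := hwu x hx _ (hqw x hx i hq)
  rwa [Nat.cast_add, ← add_assoc]

structure IsMinimalSubshift [TopologicalSpace A] (X : Set (ℤ → A)) : Prop where
  isClosed : IsClosed X
  image_shiftMap : shiftMap '' X = X
  eq_of_subset : ∀ Y : Set (ℤ → A), Y ⊆ X → Y.Nonempty → IsClosed Y → shiftMap '' Y = Y → Y = X

namespace IsMinimalSubshift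

variable [TopologicalSpace A] [DiscreteTopology A] {X : Set (ℤ → A)}

theorem exists_appearsAt (hX : IsMinimalSubshift X) {w : List A} (hw : InLang X w)
    {x : ℤ → A} (hx : x ∈ X) : ∃ k, AppearsAt w x k := by
  by_contra! hfree
  let Y := X ∩ ⋂ k, {y | AppearsAt w y k}ᶜ
  have hYclosed : IsClosed Y :=
    hX.isClosed.inter (isClosed_iInter fun k => (isOpen_setOf_appearsAt w k).isClosed_compl)
  have hYinv : shiftMap '' Y = Y := by
    refine image_shiftMap_eq fun y => and_congr (shiftMap_mem_iff hX.image_shiftMap) ?_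
    simp only [Set.mem_iInter, Set.mem_compl_iff, Set.mem_ofPred_eq, appearsAt_shiftMap]
    exact ⟨fun h k => by simpa using h (k - 1), fun h k => h (k + 1)⟩
  obtain ⟨x', hx', i, hi⟩ := hw
  have hYX := hX.eq_of_subset Y (fun y hy => hy.1) ⟨x, hx, Set.mem_iInter.2 hfree⟩ hYclosed hYinv
  exact Set.mem_iInter.1 (hYX.symm ▸ hx' : x' ∈ Y).2 i hi

theorem exists_forall_occursWithin [Finite A] (hX : IsMinimalSubshift X) {w : List A}
    (hw : InLang X w) : ∃ B : ℕ, ∀ x ∈ X, ∀ i, OccursWithin w x i B := by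
  let U : ℕ → Set (ℤ → A) := fun n => ⋃ k ∈ Set.Icc (-(n : ℤ)) n, {x | AppearsAt w x k}
  have hUopen (n : ℕ) : IsOpen (U n) := isOpen_biUnion fun k _ => isOpen_setOf_appearsAt w k
  have hUmono : Monotone U := fun m n hmn =>
    Set.biUnion_subset_biUnion_left (Set.Icc_subset_Icc (by omega) (by omega))
  have hcover : X ⊆ ⋃ n, U n := fun x hx => by
    obtain ⟨k, hk⟩ := hX.exists_appearsAt hw hx
    exact Set.mem_iUnion.2 ⟨k.natAbs, Set.mem_biUnion (x := k) ⟨by omega, by omega⟩ hk⟩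
  obtain ⟨n, hn⟩ :=
    hX.isClosed.isCompact.elim_directed_cover U hUopen hcover hUmono.directed_le
  refine ⟨2 * n + w.length, fun x hx i => ?_⟩
  obtain ⟨k, ⟨hk₁, hk₂⟩, hk⟩ :=
    Set.mem_iUnion₂.1 (hn ((shiftBy_mem_iff hX.image_shiftMap (i + n)).2 hx))
  refine ⟨(k + n).toNat, by omega, ?_⟩
  rw [Set.mem_ofPred_eq, appearsAt_shiftBy] at hk
  convert hk using 1
  omega

/-- A longest window avoiding `w` forces `w` to overhang its end by exactly one letter. -/
theorem exists_forces_overhang [Finite A] (hX : IsMinimalSubshift X) {w : List A}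
    (hw : InLang X w) (hne : w ≠ []) :
    ∃ (q : List A) (k : ℕ), InLang X q ∧ Forces X q w k ∧ k + w.length = q.length + 1 := by
  classical
  obtain ⟨B, hB⟩ := hX.exists_forall_occursWithin hw
  let P : ℕ → Prop := fun n => ∃ x ∈ X, ∃ p, ¬ OccursWithin w x p n
  have hex : ∃ n, ¬ P n := ⟨B, fun ⟨x, hx, p, h⟩ => h (hB x hx p)⟩
  obtain ⟨L, hL⟩ : ∃ L, Nat.find hex = L + 1 := by
    refine Nat.exists_eq_succ_of_ne_zero fun h0 => Nat.find_spec hex (h0 ▸ ?_)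
    obtain ⟨x, hx, -⟩ := hw
    exact ⟨x, hx, 0, fun ⟨r, hr, _⟩ => hne (List.length_eq_zero_iff.1 (by omega))⟩
  obtain ⟨x₀, hx₀, p₀, hfree⟩ : P L := not_not.1 (Nat.find_min hex (by omega))
  have hmax : ∀ x ∈ X, ∀ p, OccursWithin w x p (L + 1) := by
    have h := Nat.find_spec hex
    rw [hL] at h
    simpa [P] using h
  have hend : ∀ x ∈ X, ∀ p, AppearsAt (window x₀ p₀ L) x p →
      ∃ r, r + w.length = L + 1 ∧ AppearsAt w x (p + r) := by
    intro x hx p hq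
    obtain ⟨r, hr, hrw⟩ := hmax x hx p
    refine ⟨r, ?_, hrw⟩
    by_contra hr'
    exact hfree (OccursWithin.of_agree (appearsAt_window_iff.1 hq) ⟨r, by omega, hrw⟩)
  obtain ⟨r₀, hr₀, -⟩ := hend x₀ hx₀ p₀ (appearsAt_window_self x₀ p₀ L)
  refine ⟨window x₀ p₀ L, r₀, ⟨x₀, hx₀, p₀, appearsAt_window_self x₀ p₀ L⟩,
    fun x hx p hq => ?_, by simpa using hr₀⟩
  obtain ⟨r, hr, hrw⟩ := hend x hx p hq
  rwa [show r₀ = r by omega]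

theorem exists_forces_of_le_length [Finite A] (hX : IsMinimalSubshift X) {u : List A}
    (hu : InLang X u) :
    ∀ n ≤ u.length, ∃ (w : List A) (d : ℕ),
      InLang X w ∧ Forces X w u d ∧ d + u.length = w.length + n
  | 0, _ => ⟨u, 0, hu, Forces.refl X u, by simp⟩
  | n + 1, hn => by
    obtain ⟨w, d, hw, hwu, hlen⟩ := exists_forces_of_le_length hX hu n (by omega)
    obtain ⟨q, k, hq, hqw, hqlen⟩ :=
      hX.exists_forces_overhang hw (by rintro rfl; simp only [List.length_nil] at hlen; omega)
    exact ⟨q, k + d, hq, hqw.trans hwu, by omega⟩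

end IsMinimalSubshift

end

theorem minimal_subshift_forcing_word_general
    {A : Type*} [Fintype A] [TopologicalSpace A] [DiscreteTopology A]
    (X : Set (ℤ → A)) (hcl : IsClosed X)
    (hinv : shiftMap '' X = X)
    (hmin : ∀ Y : Set (ℤ → A), Y ⊆ X → Y.Nonempty → IsClosed Y →
      shiftMap '' Y = Y → Y = X)
    (u : List A) (hu : InLang X u) :
    ∃ v : List A, InLang X v ∧ ∀ x ∈ X, ∀ i : ℤ,
      AppearsAt v x i → AppearsAt u x (i + v.length) := by
  obtain ⟨v, d, hv, hvu, hlen⟩ :=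
    IsMinimalSubshift.exists_forces_of_le_length ⟨hcl, hinv, hmin⟩ hu u.length le_rfl
  obtain rfl : d = v.length := by omega
  exact ⟨v, hv, hvu⟩

/-- In a minimal subshift, for every word `u` of the language there is a
word `v` of the language such that every occurrence of `v` is immediately followed
by `u`. -/
theorem minimal_subshift_forcing_word
    {A : Type*} [Fintype A] [TopologicalSpace A] [DiscreteTopology A]
    (X : Set (ℤ → A)) (hne : X.Nonempty) (hcl : IsClosed X)
    (hinv : shiftMap '' X = X)
    (hmin : ∀ Y : Set (ℤ → A), Y ⊆ X → Y.Nonempty → IsClosed Y →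
      shiftMap '' Y = Y → Y = X)
    (u : List A) (hu : InLang X u) :
    ∃ v : List A, InLang X v ∧ ∀ x ∈ X, ∀ i : ℤ,
      AppearsAt v x i → AppearsAt u x (i + v.length) :=
  minimal_subshift_forcing_word_general X hcl hinv hmin u hu
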